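/- Let g : ℝ → GL_n(ℂ) be continuously differentiable, and let r ≤ s. Then g(r) · Σ_{k≥0} ∫_{r ≤ t₁ ≤ ⋯ ≤ t_k ≤ s} (g(t₁)⁻¹g'(t₁))⋯(g(t_k)⁻¹g'(t_k)) dt₁⋯dt_k = g(s). -/

import Mathlib

open MeasureTheory

attribute [local instance] Matrix.linftyOpNormedAddCommGroup Matrix.linftyOpNormedRing
  Matrix.linftyOpNormedAlgebra

/-- The ordered simplex `Δ^k_{[r,s]} = {r ≤ t₁ ≤ ⋯ ≤ t_k ≤ s}` in `ℝ^k`. -/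
def orderedSimplex (r s : ℝ) (k : ℕ) : Set (Fin k → ℝ) :=
  {t | Monotone t ∧ ∀ i, t i ∈ Set.Icc r s}

/-- The iterated integral `∫_{r ≤ t₁ ≤ ⋯ ≤ t_k ≤ s} A(t₁)⋯A(t_k) dt` (path-ordered). -/
noncomputable def simplexIntegralM (n : ℕ) (A : ℝ → Matrix (Fin n) (Fin n) ℂ)
    (r s : ℝ) (k : ℕ) : Matrix (Fin n) (Fin n) ℂ :=
  ∫ t in orderedSimplex r s k, (List.ofFn fun i => A (t i)).prod

/-! Put `A = g⁻¹ g'`, so that `g' = g A`, and let `V f u = ∫_r^u f(t) A(t) dt`. Peeling off the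
last variable with Fubini shows that the `k`-th simplex integral is `(Vᵏ 1)(s)`. Integrating
`g' = g A` gives the telescoping identity `Vᴺ g = g - g(r) ∑_{k<N} Vᵏ 1`, and on `[r, s]` the
remainder is bounded by `sup ‖g‖ · (sup ‖A‖ (s - r))ᴺ / N!`, so it tends to zero while the
series converges absolutely. -/

open Set Filter Topology
open scoped Nat

section VolterraIteration

variable {E : Type*} [NormedRing E] [NormedAlgebra ℝ E] {A h : ℝ → E} {r s : ℝ}

noncomputable def volterraIter (A h : ℝ → E) (r : ℝ) : ℕ → ℝ → E
  | 0 => h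
  | N + 1 => fun u => ∫ t in r..u, volterraIter A h r N t * A t

theorem continuous_volterraIter (hA : Continuous A) (hh : Continuous h) :
    ∀ N, Continuous (volterraIter A h r N)
  | 0 => hh
  | N + 1 => intervalIntegral.continuous_primitive
      (fun _ _ => ((continuous_volterraIter hA hh N).mul hA).intervalIntegrable _ _) r

theorem integral_sub_pow (N : ℕ) (u : ℝ) :
    ∫ t in r..u, (t - r) ^ N = (u - r) ^ (N + 1) / (N + 1) := by
  simp [intervalIntegral.integral_comp_sub_right (fun x => x ^ N)]

theorem norm_volterraIter_le {C M : ℝ} (hA : Continuous A) (hh : Continuous h)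
    (hC : ∀ t ∈ Icc r s, ‖h t‖ ≤ C) (hM : ∀ t ∈ Icc r s, ‖A t‖ ≤ M) :
    ∀ N, ∀ u ∈ Icc r s, ‖volterraIter A h r N u‖ ≤ C * (M * (u - r)) ^ N / N !
  | 0, u, hu => by simpa [volterraIter] using hC u hu
  | N + 1, u, hu => by
    have hC0 : 0 ≤ C := (norm_nonneg _).trans (hC u hu)
    have hM0 : 0 ≤ M := (norm_nonneg _).trans (hM u hu)
    calc ‖volterraIter A h r (N + 1) u‖
        ≤ ∫ t in r..u, C * M ^ (N + 1) / N ! * (t - r) ^ N := by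
          refine intervalIntegral.norm_integral_le_of_norm_le hu.1
            (ae_of_all _ fun t ht => ?_) (Continuous.intervalIntegrable (by fun_prop) _ _)
          have ht' : t ∈ Icc r s := ⟨ht.1.le, ht.2.trans hu.2⟩
          have hrt : 0 ≤ t - r := by linarith [ht.1]
          calc ‖volterraIter A h r N t * A t‖
              ≤ C * (M * (t - r)) ^ N / N ! * M :=
                (norm_mul_le _ _).trans (mul_le_mul (norm_volterraIter_le hA hh hC hM N t ht')
                  (hM t ht') (norm_nonneg _) (by positivity))
            _ = C * M ^ (N + 1) / N ! * (t - r) ^ N := by rw [mul_pow]; ring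
      _ = C * (M * (u - r)) ^ (N + 1) / (N + 1)! := by
          rw [intervalIntegral.integral_const_mul, integral_sub_pow, Nat.factorial_succ, mul_pow]
          push_cast
          field_simp

theorem volterraIter_eq_sub_mul_sum [CompleteSpace E] {g : ℝ → E} (hA : Continuous A)
    (hg : ∀ t, HasDerivAt g (g t * A t) t) (u : ℝ) :
    ∀ N, volterraIter A g r N u = g u - g r * ∑ k ∈ Finset.range N, volterraIter A 1 r k u
  | 0 => by simp [volterraIter]
  | N + 1 => by
    have hgc : Continuous g := continuous_iff_continuousAt.2 fun t => (hg t).continuousAt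
    have hint : ∀ k, IntervalIntegrable (fun t => volterraIter A 1 r k t * A t) volume r u :=
      fun k => ((continuous_volterraIter hA continuous_const k).mul hA).intervalIntegrable _ _
    have hint_sum : IntervalIntegrable
        (fun t => ∑ k ∈ Finset.range N, volterraIter A 1 r k t * A t) volume r u :=
      (continuous_finsetSum _ fun k _ =>
        (continuous_volterraIter hA continuous_const k).mul hA).intervalIntegrable _ _
    have hint_gA : IntervalIntegrable (fun t => g t * A t) volume r u :=
      (hgc.mul hA).intervalIntegrable _ _
    have hFTC : ∫ t in r..u, g t * A t = g u - g r :=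
      intervalIntegral.integral_eq_sub_of_hasDerivAt (fun t _ => hg t) hint_gA
    have hsum : ∫ t in r..u, g r * ∑ k ∈ Finset.range N, volterraIter A 1 r k t * A t =
        g r * ∑ k ∈ Finset.range N, volterraIter A 1 r (k + 1) u := by
      calc _ = g r * ∫ t in r..u, ∑ k ∈ Finset.range N, volterraIter A 1 r k t * A t :=
            (ContinuousLinearMap.mul ℝ E (g r)).intervalIntegral_comp_comm hint_sum
        _ = _ := by rw [intervalIntegral.integral_finsetSum fun k _ => hint k]; rfl
    calc volterraIter A g r (N + 1) u
        = ∫ t in r..u, g t * A t - g r * ∑ k ∈ Finset.range N, volterraIter A 1 r k t * A t := by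
          simp only [volterraIter, volterraIter_eq_sub_mul_sum hA hg, sub_mul, mul_assoc,
            Finset.sum_mul]
      _ = g u - g r - g r * ∑ k ∈ Finset.range N, volterraIter A 1 r (k + 1) u := by
          rw [intervalIntegral.integral_sub hint_gA (hint_sum.const_mul (g r)), hFTC, hsum]
      _ = _ := by
          rw [Finset.sum_range_succ' _ N, mul_add]
          simp only [volterraIter, Pi.one_apply, mul_one]
          abel

theorem summable_norm_volterraIter (hA : Continuous A) (hh : Continuous h) (hrs : r ≤ s) :
    Summable fun N => ‖volterraIter A h r N s‖ := by
  obtain ⟨C, hC⟩ := isCompact_Icc.exists_bound_of_continuousOn (s := Icc r s) hh.continuousOn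
  obtain ⟨M, hM⟩ := isCompact_Icc.exists_bound_of_continuousOn (s := Icc r s) hA.continuousOn
  refine Summable.of_nonneg_of_le (fun _ => norm_nonneg _)
    (fun N => norm_volterraIter_le hA hh hC hM N s ⟨hrs, le_rfl⟩) ?_
  simpa only [mul_div_assoc] using (Real.summable_pow_div_factorial (M * (s - r))).mul_left C

theorem mul_tsum_volterraIter_one [CompleteSpace E] {g : ℝ → E} (hA : Continuous A)
    (hg : ∀ t, HasDerivAt g (g t * A t) t) (hrs : r ≤ s) :
    g r * ∑' k, volterraIter A 1 r k s = g s := by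
  have hgc : Continuous g := continuous_iff_continuousAt.2 fun t => (hg t).continuousAt
  have hsum : Summable fun k => volterraIter A 1 r k s :=
    (summable_norm_volterraIter hA continuous_const hrs).of_norm
  have hrem : Tendsto (fun N => volterraIter A g r N s) atTop (𝓝 0) :=
    tendsto_zero_iff_norm_tendsto_zero.2
      (summable_norm_volterraIter hA hgc hrs).tendsto_atTop_zero
  have hpartial : ∀ N, g r * ∑ k ∈ Finset.range N, volterraIter A 1 r k s =
      g s - volterraIter A g r N s := fun N => by
    rw [volterraIter_eq_sub_mul_sum hA hg]
    abel
  refine tendsto_nhds_unique (hsum.hasSum.tendsto_sum_nat.const_mul (g r)) ?_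
  simpa only [hpartial, sub_zero] using tendsto_const_nhds.sub hrem

end VolterraIteration

theorem Fin.monotone_snoc_iff {α : Type*} [Preorder α] {k : ℕ} {t : Fin k → α} {u : α} :
    Monotone (Fin.snoc t u : Fin (k + 1) → α) ↔ Monotone t ∧ ∀ i, t i ≤ u := by
  refine ⟨fun h => ⟨fun i j hij => ?_, fun i => ?_⟩, fun ⟨ht, hu⟩ i j hij => ?_⟩
  · simpa using h (Fin.castSucc_le_castSucc_iff.2 hij)
  · simpa using h (Fin.le_last i.castSucc)
  · cases j using Fin.lastCases with
    | last => cases i using Fin.lastCases <;> simp [hu]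
    | cast j =>
      cases i using Fin.lastCases with
      | last => exact absurd hij (Fin.castSucc_lt_last j).not_ge
      | cast i => simpa using ht (Fin.castSucc_le_castSucc_iff.1 hij)

section OrderedSimplex

variable {r s : ℝ} {k : ℕ}

theorem orderedSimplex_eq_inter_pi :
    orderedSimplex r s k = {t | Monotone t} ∩ Set.pi univ fun _ => Icc r s := by
  ext t
  simp only [orderedSimplex, mem_inter_iff, mem_univ_pi]
  rfl

theorem isCompact_orderedSimplex : IsCompact (orderedSimplex r s k) := by
  rw [orderedSimplex_eq_inter_pi]
  exact (isCompact_univ_pi fun _ => isCompact_Icc).inter_left isClosed_monotone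

theorem measurableSet_orderedSimplex : MeasurableSet (orderedSimplex r s k) :=
  isCompact_orderedSimplex.isClosed.measurableSet

theorem orderedSimplex_zero : orderedSimplex r s 0 = univ :=
  eq_univ_of_forall fun t => ⟨Subsingleton.monotone t, finZeroElim⟩

theorem snoc_mem_orderedSimplex_iff {u : ℝ} {t : Fin k → ℝ} :
    Fin.snoc t u ∈ orderedSimplex r s (k + 1) ↔ u ∈ Icc r s ∧ t ∈ orderedSimplex r u k := by
  simp only [orderedSimplex, mem_ofPred_eq, Fin.monotone_snoc_iff, Fin.forall_fin_succ',
    Fin.snoc_castSucc, Fin.snoc_last, mem_Icc]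
  grind

theorem setIntegral_orderedSimplex_succ {E : Type*} [NormedAddCommGroup E] [NormedSpace ℝ E]
    {f : (Fin (k + 1) → ℝ) → E} (hf : IntegrableOn f (orderedSimplex r s (k + 1)))
    (hrs : r ≤ s) :
    ∫ x in orderedSimplex r s (k + 1), f x =
      ∫ u in r..s, ∫ t in orderedSimplex r u k, f (Fin.snoc t u) := by
  set e := (MeasurableEquiv.piFinSuccAbove (fun _ : Fin (k + 1) => ℝ) (Fin.last k)).symm
  have he : MeasurePreserving e (volume.prod volume) volume :=
    (volume_preserving_piFinSuccAbove (fun _ : Fin (k + 1) => ℝ) (Fin.last k)).symm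
  have he_apply : ∀ p, e p = Fin.snoc p.2 p.1 := fun p => Fin.insertNth_last' p.1 p.2
  set T := e ⁻¹' orderedSimplex r s (k + 1)
  have hT : MeasurableSet T := e.measurable measurableSet_orderedSimplex
  have hslice : ∀ u, ∫ t, T.indicator (fun p => f (e p)) (u, t) =
      (Icc r s).indicator (fun u => ∫ t in orderedSimplex r u k, f (Fin.snoc t u)) u := by
    intro u
    by_cases hu : u ∈ Icc r s
    · have hmem : ∀ t, (u, t) ∈ T ↔ t ∈ orderedSimplex r u k := fun t => by
        simp only [T, mem_preimage, he_apply, snoc_mem_orderedSimplex_iff, hu, true_and]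
      rw [indicator_of_mem hu, ← integral_indicator measurableSet_orderedSimplex]
      congr 1 with t
      by_cases ht : t ∈ orderedSimplex r u k
      · rw [indicator_of_mem ((hmem t).2 ht), indicator_of_mem ht, he_apply]
      · rw [indicator_of_notMem (mt (hmem t).1 ht), indicator_of_notMem ht]
    · simp [T, he_apply, snoc_mem_orderedSimplex_iff, hu]
  have hint : Integrable (T.indicator fun p => f (e p)) (volume.prod volume) :=
    (integrable_indicator_iff hT).2 ((he.integrableOn_comp_preimage e.measurableEmbedding).2 hf)
  rw [← he.setIntegral_preimage_emb e.measurableEmbedding, ← integral_indicator hT,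
    integral_prod _ hint]
  simp_rw [hslice]
  rw [integral_indicator measurableSet_Icc, integral_Icc_eq_integral_Ioc,
    ← intervalIntegral.integral_of_le hrs]

end OrderedSimplex

theorem continuous_prod_ofFn_comp {α M : Type*} [TopologicalSpace α] [Monoid M]
    [TopologicalSpace M] [ContinuousMul M] {A : α → M} (hA : Continuous A) (k : ℕ) :
    Continuous fun t : Fin k → α => (List.ofFn fun i => A (t i)).prod := by
  simp only [List.ofFn_eq_map]
  exact continuous_list_prod _ fun i _ => hA.comp (continuous_apply i)

theorem setIntegral_orderedSimplex_prod_ofFn_succ {E : Type*} [NormedRing E] [NormedAlgebra ℝ E]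
    {A : ℝ → E} {r s : ℝ} (hA : Continuous A) (hrs : r ≤ s) (k : ℕ) :
    ∫ t in orderedSimplex r s (k + 1), (List.ofFn fun i => A (t i)).prod =
      ∫ u in r..s, (∫ t in orderedSimplex r u k, (List.ofFn fun i => A (t i)).prod) * A u := by
  have hint : ∀ u k, IntegrableOn (fun t : Fin k → ℝ => (List.ofFn fun i => A (t i)).prod)
      (orderedSimplex r u k) := fun u k =>
    (continuous_prod_ofFn_comp hA k).continuousOn.integrableOn_compact isCompact_orderedSimplex
  rw [setIntegral_orderedSimplex_succ (hint s (k + 1)) hrs]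
  congr 1 with u
  simp only [List.ofFn_succ', Fin.snoc_castSucc, Fin.snoc_last, List.prod_concat]
  exact integral_mul_const_of_integrable (hint u k)

theorem simplexIntegralM_zero {n : ℕ} (A : ℝ → Matrix (Fin n) (Fin n) ℂ) (r s : ℝ) :
    simplexIntegralM n A r s 0 = 1 := by
  simp [simplexIntegralM, orderedSimplex_zero, measureReal_def, volume_pi]

theorem simplexIntegralM_eq_volterraIter {n : ℕ} {A : ℝ → Matrix (Fin n) (Fin n) ℂ} {r : ℝ}
    (hA : Continuous A) : ∀ k s, r ≤ s → simplexIntegralM n A r s k = volterraIter A 1 r k s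
  | 0, s, _ => simplexIntegralM_zero A r s
  | k + 1, s, hrs => by
    rw [simplexIntegralM, setIntegral_orderedSimplex_prod_ofFn_succ hA hrs]
    refine intervalIntegral.integral_congr fun u hu => ?_
    rw [uIcc_of_le hrs] at hu
    change simplexIntegralM n A r u k * A u = _
    rw [simplexIntegralM_eq_volterraIter hA k u hu.1]

/-- Multiplicative fundamental theorem of calculus: for a continuously differentiable
`g : ℝ → GL_n(ℂ)` and `r ≤ s`, the path-ordered exponential of the logarithmic
derivative `g⁻¹g'` transports `g(r)` to `g(s)`:
`g(r) · Σ_{k≥0} ∫_{r ≤ t₁ ≤ ⋯ ≤ t_k ≤ s} (g⁻¹g')(t₁)⋯(g⁻¹g')(t_k) dt = g(s)`. -/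
theorem pathOrderedExp_log_deriv (n : ℕ) (g g' : ℝ → Matrix (Fin n) (Fin n) ℂ)
    (hg : ∀ t, HasDerivAt g (g' t) t) (hg' : Continuous g')
    (hunit : ∀ t, IsUnit (g t)) (r s : ℝ) (hrs : r ≤ s) :
    g r * ∑' k : ℕ, simplexIntegralM n (fun t => (g t)⁻¹ * g' t) r s k = g s := by
  have hgc : Continuous g := continuous_iff_continuousAt.2 fun t => (hg t).continuousAt
  have hdet : ∀ t, IsUnit (g t).det := fun t => (Matrix.isUnit_iff_isUnit_det _).1 (hunit t)
  have hinv : Continuous fun t => (g t)⁻¹ := continuous_iff_continuousAt.2 fun t =>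
    (continuousAt_matrix_inv _ (NormedRing.inverse_continuousAt (hdet t).unit)).comp
      hgc.continuousAt
  have hA : Continuous fun t => (g t)⁻¹ * g' t := hinv.mul hg'
  have hgA : ∀ t, HasDerivAt g (g t * ((g t)⁻¹ * g' t)) t := fun t => by
    rw [← mul_assoc, Matrix.mul_nonsing_inv _ (hdet t), one_mul]
    exact hg t
  simp only [simplexIntegralM_eq_volterraIter hA _ s hrs]
  exact mul_tsum_volterraIter_one hA hgA hrs
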